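/- arXiv:1506.00899 — 3 statements merged into one kernel-verified Lean document; each statement's English description precedes it below -/
import Mathlib

section
/- Let X ∈ ℂ^{N×L} be a block-sparse matrix with chunk support contained in T₁, |T₁| ≤ k₁, and let T₂ be a chunk support disjoint from T₁ with |T₂| ≤ k₂. Let P_{(T₂)} = Φ_{[T₂]}(Φ_{[T₂]}^H Φ_{[T₂]})^{−1} Φ_{[T₂]}^H be the orthogonal projection onto the column span of Φ_{[T₂]}. If Φ satisfies the (k₁+k₂)-th order block-RIP with constant δ := δ_{k₁+k₂|d} < 1, then ‖P_{(T₂)} Φ X‖_F ≤ δ √(1+δ) ‖X‖_F. -/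
open Matrix

def BlockRIPBound {M K d : ℕ} (Φ : Matrix (Fin M) (Fin K × Fin d) ℂ)
    (k : ℕ) (δ : ℝ) : Prop :=
  ∀ x : (Fin K × Fin d) → ℂ,
    {n : Fin K | ∃ j, x (n, j) ≠ 0}.ncard ≤ k →
      ((1 - δ) * ∑ p, ‖x p‖ ^ 2 ≤ ∑ i, ‖Φ.mulVec x i‖ ^ 2 ∧
        ∑ i, ‖Φ.mulVec x i‖ ^ 2 ≤ (1 + δ) * ∑ p, ‖x p‖ ^ 2)

def subCols {M K d : ℕ} (Φ : Matrix (Fin M) (Fin K × Fin d) ℂ) (T : Finset (Fin K)) :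
    Matrix (Fin M) ({x // x ∈ T} × Fin d) ℂ :=
  fun i p => Φ i (p.1.1, p.2)

/-- The Frobenius norm of a matrix. -/
noncomputable def frob {m n : Type*} [Fintype m] [Fintype n] (A : Matrix m n ℂ) : ℝ :=
  Real.sqrt (∑ i, ∑ j, ‖A i j‖ ^ 2)

/-!
Write `Y = ΦX` and `P Y = Φ Z` with `Z` supported on `T₂`; since `P` is an orthogonal
projection, `Re ⟪Φ X, Φ Z⟫ = ‖Φ Z‖²`. As `X` and `Z` have disjoint supports, the block-RIP on
`T₁ ∪ T₂` bounds the quadratic form `(s, t) ↦ ‖Φ(sX + tZ)‖²` above and below by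
`(1 ± δ)(s²‖X‖² + t²‖Z‖²)`. Polarizing gives `‖Φ Z‖⁴ ≤ δ²‖X‖²‖Z‖²`, and evaluating the lower
bound at the optimal point `(s, t) = (‖Φ Z‖², -2δ‖X‖²)` then yields
`(2 - δ)‖P Φ X‖² ≤ 2δ²‖X‖²`, which is stronger than `‖P Φ X‖² ≤ δ²(1 + δ)‖X‖²`.
Everything works column by column, and the Frobenius norm adds up the columns.
-/

theorem two_sub_mul_le_of_quadratic_bounds {δ X Z a p : ℝ} (hδ1 : δ < 1) (hX : 0 ≤ X)
    (hZ : 0 ≤ Z)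
    (hlow : ∀ s t : ℝ, (1 - δ) * (s ^ 2 * X + t ^ 2 * Z) ≤ s ^ 2 * a + 2 * s * t * p + t ^ 2 * p)
    (hup : ∀ s t : ℝ, s ^ 2 * a + 2 * s * t * p + t ^ 2 * p ≤ (1 + δ) * (s ^ 2 * X + t ^ 2 * Z)) :
    (2 - δ) * p ≤ 2 * δ ^ 2 * X := by
  rcases le_or_gt p 0 with hp | hp
  · nlinarith
  have ha : a ≤ (1 + δ) * X := by simpa using hup 1 0
  have hδX : 0 < δ * X := by nlinarith [hlow 1 (-1)]
  have hXp : 0 < X * p := mul_pos (lt_of_le_of_ne hX (by rintro rfl; simp at hδX)) hp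
  -- polarization: subtract the lower bound at `(p, -δX)` from the upper bound at `(p, δX)`
  have hpZ : p ^ 2 ≤ δ ^ 2 * X * Z := by
    have := hup p (δ * X)
    have := hlow p (-(δ * X))
    nlinarith
  have hfactor : 2 * (X * p) * ((2 - δ) * p - 2 * δ ^ 2 * X) ≤ 0 := by
    have := hlow p (-(2 * δ * X))
    nlinarith [mul_le_mul_of_nonneg_left hpZ (by nlinarith : 0 ≤ (1 - δ) * X),
      mul_le_mul_of_nonneg_left ha (sq_nonneg p)]
  nlinarith

section InnerProductSpace

variable {𝕜 E F : Type*} [RCLike 𝕜] [NormedAddCommGroup E] [InnerProductSpace 𝕜 E]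
  [NormedAddCommGroup F] [InnerProductSpace 𝕜 F]

theorem norm_ofReal_smul_add_ofReal_smul_sq (s t : ℝ) (u v : E) :
    ‖(s : 𝕜) • u + (t : 𝕜) • v‖ ^ 2
      = s ^ 2 * ‖u‖ ^ 2 + 2 * s * t * RCLike.re (inner 𝕜 u v) + t ^ 2 * ‖v‖ ^ 2 := by
  rw [norm_add_sq (𝕜 := 𝕜), norm_smul, norm_smul, inner_smul_real_left, inner_smul_real_right,
    RCLike.norm_ofReal, RCLike.norm_ofReal, mul_pow, mul_pow, sq_abs, sq_abs, RCLike.smul_re,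
    RCLike.smul_re]
  ring

theorem two_sub_mul_norm_sq_map_le (Φ : E →ₗ[𝕜] F) {δ : ℝ} (hδ1 : δ < 1) {x z : E}
    (hxz : inner 𝕜 x z = 0)
    (hΦ : ∀ s t : ℝ,
      (1 - δ) * ‖(s : 𝕜) • x + (t : 𝕜) • z‖ ^ 2 ≤ ‖Φ ((s : 𝕜) • x + (t : 𝕜) • z)‖ ^ 2 ∧
        ‖Φ ((s : 𝕜) • x + (t : 𝕜) • z)‖ ^ 2 ≤ (1 + δ) * ‖(s : 𝕜) • x + (t : 𝕜) • z‖ ^ 2)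
    (hproj : RCLike.re (inner 𝕜 (Φ x) (Φ z)) = ‖Φ z‖ ^ 2) :
    (2 - δ) * ‖Φ z‖ ^ 2 ≤ 2 * δ ^ 2 * ‖x‖ ^ 2 := by
  have hdom (s t : ℝ) :
      ‖(s : 𝕜) • x + (t : 𝕜) • z‖ ^ 2 = s ^ 2 * ‖x‖ ^ 2 + t ^ 2 * ‖z‖ ^ 2 := by
    rw [norm_ofReal_smul_add_ofReal_smul_sq, hxz, map_zero]
    ring
  have himg (s t : ℝ) : ‖Φ ((s : 𝕜) • x + (t : 𝕜) • z)‖ ^ 2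
      = s ^ 2 * ‖Φ x‖ ^ 2 + 2 * s * t * ‖Φ z‖ ^ 2 + t ^ 2 * ‖Φ z‖ ^ 2 := by
    rw [map_add, map_smul, map_smul, norm_ofReal_smul_add_ofReal_smul_sq, hproj]
  refine two_sub_mul_le_of_quadratic_bounds (a := ‖Φ x‖ ^ 2) hδ1 (sq_nonneg _) (sq_nonneg ‖z‖)
    (fun s t => ?_) (fun s t => ?_)
  · simpa only [hdom, himg] using (hΦ s t).1
  · simpa only [hdom, himg] using (hΦ s t).2

theorem IsStarProjection.re_inner_apply_eq_norm_sq [CompleteSpace E] {T : E →L[𝕜] E}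
    (hT : IsStarProjection T) (y : E) : RCLike.re (inner 𝕜 y (T y)) = ‖T y‖ ^ 2 := by
  rw [← inner_self_eq_norm_sq (𝕜 := 𝕜), ← ContinuousLinearMap.adjoint_inner_right,
    ContinuousLinearMap.isSelfAdjoint_iff'.mp hT.isSelfAdjoint, ← mul_apply_eq_comp,
    hT.isIdempotentElem.eq]

end InnerProductSpace

theorem Matrix.isStarProjection_mul_inv_mul_conjTranspose {m n R : Type*} [Fintype m]
    [Fintype n] [DecidableEq n] [CommRing R] [StarRing R] (A : Matrix m n R) :
    IsStarProjection (A * (Aᴴ * A)⁻¹ * Aᴴ) where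
  isIdempotentElem := by
    by_cases hG : IsUnit (Aᴴ * A).det
    · calc A * (Aᴴ * A)⁻¹ * Aᴴ * (A * (Aᴴ * A)⁻¹ * Aᴴ)
          = A * ((Aᴴ * A)⁻¹ * (Aᴴ * A) * (Aᴴ * A)⁻¹) * Aᴴ := by simp only [Matrix.mul_assoc]
        _ = A * (Aᴴ * A)⁻¹ * Aᴴ := by rw [nonsing_inv_mul _ hG, Matrix.one_mul]
    -- a singular `Aᴴ * A` has junk inverse `0`
    · simp [IsIdempotentElem, nonsing_inv_apply_not_isUnit _ hG]
  isSelfAdjoint := by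
    simp [IsSelfAdjoint, star_eq_conjTranspose, conjTranspose_nonsing_inv, Matrix.mul_assoc]

section BlockSparse

variable {M K d : ℕ}

theorem ncard_blockSupport_le {T : Finset (Fin K)} {x : Fin K × Fin d → ℂ}
    (hx : ∀ p : Fin K × Fin d, p.1 ∉ T → x p = 0) :
    {n : Fin K | ∃ j, x (n, j) ≠ 0}.ncard ≤ T.card := by
  rw [← Set.ncard_coe_finset]
  refine Set.ncard_le_ncard (fun n ⟨j, hj⟩ => ?_) T.finite_toSet
  by_contra hn
  exact hj (hx (n, j) hn)

theorem BlockRIPBound.norm_sq_bounds {Φ : Matrix (Fin M) (Fin K × Fin d) ℂ} {k : ℕ} {δ : ℝ}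
    (hRIP : BlockRIPBound Φ k δ) {T : Finset (Fin K)} (hT : T.card ≤ k)
    {w : EuclideanSpace ℂ (Fin K × Fin d)} (hw : ∀ p : Fin K × Fin d, p.1 ∉ T → w p = 0) :
    (1 - δ) * ‖w‖ ^ 2 ≤ ‖toEuclideanLin Φ w‖ ^ 2 ∧
      ‖toEuclideanLin Φ w‖ ^ 2 ≤ (1 + δ) * ‖w‖ ^ 2 := by
  simp only [EuclideanSpace.norm_sq_eq]
  exact hRIP w.ofLp ((ncard_blockSupport_le hw).trans hT)

theorem exists_mulVec_eq_subCols_mulVec (Φ : Matrix (Fin M) (Fin K × Fin d) ℂ)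
    (T : Finset (Fin K)) (v : {n // n ∈ T} × Fin d → ℂ) :
    ∃ z : Fin K × Fin d → ℂ, (∀ p : Fin K × Fin d, p.1 ∉ T → z p = 0) ∧
      Φ *ᵥ z = subCols Φ T *ᵥ v := by
  let e : {n // n ∈ T} × Fin d → Fin K × Fin d := fun q => (q.1.1, q.2)
  have he : e.Injective := fun q q' h => by
    ext <;> simp_all [e, Prod.ext_iff]
  refine ⟨Function.extend e v 0, fun p hp => ?_, funext fun i => ?_⟩
  · refine Function.extend_apply' _ _ _ fun ⟨q, hq⟩ => hp ?_
    simp [← hq, e]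
  · symm
    refine Fintype.sum_of_injective e he _ _ (fun p hp => ?_) (fun q => ?_)
    · simp [Function.extend_apply' _ _ _ hp]
    · simp [subCols, he.extend_apply, e]

noncomputable def blockProj (Φ : Matrix (Fin M) (Fin K × Fin d) ℂ) (T : Finset (Fin K)) :
    Matrix (Fin M) (Fin M) ℂ :=
  subCols Φ T * ((subCols Φ T)ᴴ * subCols Φ T)⁻¹ * (subCols Φ T)ᴴ

open WithLp in
theorem sum_norm_sq_blockProj_mulVec_le {Φ : Matrix (Fin M) (Fin K × Fin d) ℂ} {k : ℕ}
    {δ : ℝ} (hδ0 : 0 ≤ δ) (hδ1 : δ < 1) (hRIP : BlockRIPBound Φ k δ)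
    {T₁ T₂ : Finset (Fin K)} (hdisj : Disjoint T₁ T₂) (hcard : (T₁ ∪ T₂).card ≤ k)
    {x : Fin K × Fin d → ℂ} (hx : ∀ p : Fin K × Fin d, p.1 ∉ T₁ → x p = 0) :
    ∑ i, ‖(blockProj Φ T₂ *ᵥ (Φ *ᵥ x)) i‖ ^ 2 ≤ δ ^ 2 * (1 + δ) * ∑ p, ‖x p‖ ^ 2 := by
  set A := subCols Φ T₂
  set P := blockProj Φ T₂
  obtain ⟨z, hz, hΦz⟩ := exists_mulVec_eq_subCols_mulVec Φ T₂ (((Aᴴ * A)⁻¹ * Aᴴ) *ᵥ (Φ *ᵥ x))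
  have hPz : Φ *ᵥ z = P *ᵥ (Φ *ᵥ x) := by
    rw [hΦz, mulVec_mulVec, ← Matrix.mul_assoc]
    rfl
  set Pℂ := toEuclideanCLM (𝕜 := ℂ) P
  have hPproj : IsStarProjection Pℂ := (isStarProjection_mul_inv_mul_conjTranspose A).map _
  set Φℂ := toEuclideanLin Φ
  have hΦℂz : Φℂ (toLp 2 z) = Pℂ (Φℂ (toLp 2 x)) := by simp [Φℂ, Pℂ, hPz]
  have hsharp := two_sub_mul_norm_sq_map_le Φℂ hδ1 (x := toLp 2 x) (z := toLp 2 z) ?orth ?rip ?proj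
  case orth =>
    rw [PiLp.inner_apply, Finset.sum_eq_zero fun p _ => ?_]
    by_cases hp : p.1 ∈ T₁
    · simp [hz p (Finset.disjoint_left.mp hdisj hp)]
    · simp [hx p hp]
  case rip =>
    refine fun s t => hRIP.norm_sq_bounds hcard fun p hp => ?_
    rw [Finset.mem_union, not_or] at hp
    simp [hx p hp.1, hz p hp.2]
  case proj => rw [hΦℂz, hPproj.re_inner_apply_eq_norm_sq]
  rw [hΦℂz, EuclideanSpace.norm_sq_eq, EuclideanSpace.norm_sq_eq] at hsharp
  simp only [Φℂ, Pℂ, toLpLin_toLp, toLin'_apply, toEuclideanCLM_toLp, PiLp.toLp_apply] at hsharp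
  have : 0 ≤ δ ^ 3 * (1 - δ) * ∑ p, ‖x p‖ ^ 2 := by
    have := sub_nonneg.2 hδ1.le
    positivity
  nlinarith

end BlockSparse

theorem frob_le_mul_of_forall_col {m n ι : Type*} [Fintype m] [Fintype n] [Fintype ι]
    {A : Matrix m ι ℂ} {B : Matrix n ι ℂ} {c : ℝ} (hc : 0 ≤ c)
    (h : ∀ l, ∑ i, ‖A i l‖ ^ 2 ≤ c ^ 2 * ∑ j, ‖B j l‖ ^ 2) : frob A ≤ c * frob B := by
  rw [frob, frob, ← Real.sqrt_sq hc, ← Real.sqrt_mul (sq_nonneg c), Finset.sum_comm,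
    Finset.sum_comm (f := fun j l => ‖B j l‖ ^ 2), Finset.mul_sum]
  exact Real.sqrt_le_sqrt (Finset.sum_le_sum fun l _ => h l)

/-- If `X` has chunk support contained in `T₁` (`|T₁| ≤ k₁`), `T₂` is disjoint from `T₁`
(`|T₂| ≤ k₂`), `P_{(T₂)} = Φ_{[T₂]}(Φ_{[T₂]}ᴴ Φ_{[T₂]})⁻¹ Φ_{[T₂]}ᴴ` is the orthogonal
projection onto the column span of `Φ_{[T₂]}`, and `Φ` satisfies the `(k₁+k₂)`-th order
block-RIP with constant `δ < 1`, then `‖P_{(T₂)} Φ X‖_F ≤ δ √(1+δ) ‖X‖_F`. -/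
theorem proj_mul_frob_le {M K d L : ℕ}
    (Φ : Matrix (Fin M) (Fin K × Fin d) ℂ) (k₁ k₂ : ℕ) (δ : ℝ)
    (hδ0 : 0 ≤ δ) (hδ1 : δ < 1) (hRIP : BlockRIPBound Φ (k₁ + k₂) δ)
    (T₁ T₂ : Finset (Fin K)) (hdisj : Disjoint T₁ T₂)
    (hT₁ : T₁.card ≤ k₁) (hT₂ : T₂.card ≤ k₂)
    (X : Matrix (Fin K × Fin d) (Fin L) ℂ)
    (hsupp : ∀ n : Fin K, n ∉ T₁ → ∀ j l, X (n, j) l = 0)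
    (P : Matrix (Fin M) (Fin M) ℂ)
    (hP : P = subCols Φ T₂ * ((subCols Φ T₂)ᴴ * subCols Φ T₂)⁻¹ * (subCols Φ T₂)ᴴ) :
    frob (P * (Φ * X)) ≤ δ * Real.sqrt (1 + δ) * frob X := by
  subst hP
  refine frob_le_mul_of_forall_col (by positivity) fun l => ?_
  rw [mul_pow, Real.sq_sqrt (by linarith)]
  exact sum_norm_sq_blockProj_mulVec_le hδ0 hδ1 hRIP hdisj
    ((Finset.card_union_le _ _).trans (add_le_add hT₁ hT₂)) fun p hp => hsupp p.1 hp p.2 l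
end

section
/- Let Φ have block-RIP constants, T the chunk support of X with |T| ≤ s̄, and let T̂ be any chunk support with |T̂| ≤ s̄. Let R = (I − Φ_{[T̂]} Φ_{[T̂]}^†)(Φ_{[T]} X^{[T]} + N). Then ‖R‖_F ≤ √(1 + δ_{s̄|d}) · ‖X^{[T∖T̂]}‖_F + ‖N‖_F. -/
open Matrix

noncomputable def pinvFC {m n : Type*} [Fintype m] [Fintype n] [DecidableEq n]
    (A : Matrix m n ℂ) : Matrix n m ℂ :=
  (Aᴴ * A)⁻¹ * Aᴴ

/-- `X^{[S]}`: the matrix keeping only the chunks of `X` indexed by `S` (zero elsewhere). -/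
def restrictChunks {K d L : ℕ} (X : Matrix (Fin K × Fin d) (Fin L) ℂ)
    (S : Finset (Fin K)) : Matrix (Fin K × Fin d) (Fin L) ℂ :=
  fun p l => if p.1 ∈ S then X p l else 0

/-!
Write `P = I − Φ_{[T̂]} Φ_{[T̂]}^†`. The lower block-RIP bound makes `Φ_{[T̂]}` injective, so its
Gram matrix is invertible and `P` is a star projection with `P Φ_{[T̂]} = 0`. The chunks of `X`
lying in `T̂` are therefore annihilated, leaving `R = P Φ X^{[T∖T̂]} + P N`. Since `P` is a
contraction, the triangle inequality and the upper block-RIP bound applied column by column to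
`X^{[T∖T̂]}` (whose chunk support lies in `T`) give the estimate.
-/

section Frobenius

variable {m n : Type*} [Fintype m] [Fintype n]

lemma frob_eq_norm_toLp_uncurry (A : Matrix m n ℂ) :
    frob A = ‖(WithLp.toLp 2 (Function.uncurry A) : EuclideanSpace ℂ (m × n))‖ := by
  rw [EuclideanSpace.norm_eq, frob, Fintype.sum_prod_type]
  rfl

lemma frob_add_le (A B : Matrix m n ℂ) : frob (A + B) ≤ frob A + frob B := by
  have hsum : (WithLp.toLp 2 (Function.uncurry (A + B)) : EuclideanSpace ℂ (m × n)) =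
      WithLp.toLp 2 (Function.uncurry A) + WithLp.toLp 2 (Function.uncurry B) := rfl
  simp only [frob_eq_norm_toLp_uncurry, hsum]
  exact norm_add_le _ _

lemma frob_mul_le_of_forall_col {k : Type*} [Fintype k] {c : ℝ} (P : Matrix k m ℂ)
    (B : Matrix m n ℂ) (h : ∀ j, ∑ i, ‖(P *ᵥ fun l => B l j) i‖ ^ 2 ≤ c * ∑ l, ‖B l j‖ ^ 2) :
    frob (P * B) ≤ √c * frob B := by
  rw [frob, frob, ← Real.sqrt_mul' _ (by positivity)]
  refine Real.sqrt_le_sqrt ?_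
  rw [Finset.sum_comm, Finset.sum_comm (γ := m), Finset.mul_sum]
  exact Finset.sum_le_sum fun j _ => h j

open scoped Matrix.Norms.L2Operator in
lemma sum_norm_sq_mulVec_le_of_isStarProjection [DecidableEq m] {P : Matrix m m ℂ}
    (hP : IsStarProjection P) (v : m → ℂ) : ∑ i, ‖(P *ᵥ v) i‖ ^ 2 ≤ ∑ i, ‖v i‖ ^ 2 := by
  have hPv : ‖(WithLp.toLp 2 (P *ᵥ v) : EuclideanSpace ℂ m)‖ ≤
      ‖(WithLp.toLp 2 v : EuclideanSpace ℂ m)‖ := by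
    simpa using (P.l2_opNorm_mulVec (WithLp.toLp 2 v)).trans
      (mul_le_of_le_one_left (norm_nonneg _) hP.norm_le)
  rw [← EuclideanSpace.norm_sq_eq (WithLp.toLp 2 (P *ᵥ v)),
    ← EuclideanSpace.norm_sq_eq (WithLp.toLp 2 v)]
  gcongr

lemma frob_mul_le_of_isStarProjection [DecidableEq m] {P : Matrix m m ℂ}
    (hP : IsStarProjection P) (B : Matrix m n ℂ) : frob (P * B) ≤ frob B := by
  simpa using frob_mul_le_of_forall_col (c := 1) P B fun j => by
    simpa using sum_norm_sq_mulVec_le_of_isStarProjection hP fun l => B l j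

end Frobenius

section Pseudoinverse

variable {m n : Type*} [Fintype m] [Fintype n] [DecidableEq n] {A : Matrix m n ℂ}

lemma pinvFC_mul_self (hA : IsUnit (Aᴴ * A).det) : pinvFC A * A = 1 := by
  rw [pinvFC, Matrix.mul_assoc, nonsing_inv_mul _ hA]

lemma isStarProjection_mul_pinvFC (hA : IsUnit (Aᴴ * A).det) :
    IsStarProjection (A * pinvFC A) where
  isIdempotentElem := by
    rw [IsIdempotentElem, Matrix.mul_assoc, ← Matrix.mul_assoc (pinvFC A), pinvFC_mul_self hA,
      Matrix.one_mul]
  isSelfAdjoint := by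
    rw [IsSelfAdjoint, star_eq_conjTranspose, pinvFC, conjTranspose_mul, conjTranspose_mul,
      conjTranspose_nonsing_inv, conjTranspose_mul, conjTranspose_conjTranspose, Matrix.mul_assoc]

lemma one_sub_mul_pinvFC_mul_self [DecidableEq m] (hA : IsUnit (Aᴴ * A).det) :
    (1 - A * pinvFC A) * A = 0 := by
  rw [Matrix.sub_mul, Matrix.one_mul, Matrix.mul_assoc, pinvFC_mul_self hA, Matrix.mul_one,
    sub_self]

end Pseudoinverse

section Chunks

variable {M K d : ℕ}

lemma ncard_chunkSupport_le {x : Fin K × Fin d → ℂ} {T : Finset (Fin K)}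
    (hx : ∀ p, p.1 ∉ T → x p = 0) : {n : Fin K | ∃ j, x (n, j) ≠ 0}.ncard ≤ T.card := by
  rw [← Set.ncard_coe_finset]
  refine Set.ncard_le_ncard (fun n ⟨j, hj⟩ => ?_) T.finite_toSet
  by_contra hn
  exact hj (hx (n, j) hn)

lemma mulVec_eq_subCols_mulVec (Φ : Matrix (Fin M) (Fin K × Fin d) ℂ) {T : Finset (Fin K)}
    {x : Fin K × Fin d → ℂ} (hx : ∀ p, p.1 ∉ T → x p = 0) :
    Φ *ᵥ x = subCols Φ T *ᵥ fun q => x (q.1.1, q.2) := by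
  ext i
  refine (Fintype.sum_of_injective (fun q : T × Fin d => (q.1.1, q.2)) ?_ _ _ ?_
    fun _ => rfl).symm
  · rintro ⟨⟨a, ha⟩, j⟩ ⟨⟨b, hb⟩, k⟩ h
    simp_all
  · rintro ⟨a, j⟩ hp
    have ha : a ∉ T := fun ha => hp ⟨(⟨a, ha⟩, j), rfl⟩
    simp [hx (a, j) ha]

lemma mul_eq_subCols_mul {ι : Type*} (Φ : Matrix (Fin M) (Fin K × Fin d) ℂ)
    {T : Finset (Fin K)} {Y : Matrix (Fin K × Fin d) ι ℂ} (hY : ∀ p l, p.1 ∉ T → Y p l = 0) :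
    Φ * Y = subCols Φ T * Y.submatrix (fun q : T × Fin d => (q.1.1, q.2)) id := by
  ext i l
  exact congrFun (mulVec_eq_subCols_mulVec Φ (x := fun p => Y p l) (hY · l)) i

variable {Φ : Matrix (Fin M) (Fin K × Fin d) ℂ} {k : ℕ} {δ : ℝ} {T : Finset (Fin K)}

lemma subCols_mulVec_eq_zero (hδ : δ < 1) (hRIP : BlockRIPBound Φ k δ) (hT : T.card ≤ k)
    {v : T × Fin d → ℂ} (hv : subCols Φ T *ᵥ v = 0) : v = 0 := by
  classical
  set x : Fin K × Fin d → ℂ := fun p => if h : p.1 ∈ T then v (⟨p.1, h⟩, p.2) else 0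
  have hx : ∀ p, p.1 ∉ T → x p = 0 := fun p hp => dif_neg hp
  have hxv : (fun q : T × Fin d => x (q.1.1, q.2)) = v := funext fun q => dif_pos q.1.2
  have hΦx : Φ *ᵥ x = 0 := by rw [mulVec_eq_subCols_mulVec Φ hx, hxv, hv]
  have hlower := (hRIP x ((ncard_chunkSupport_le hx).trans hT)).1
  simp only [hΦx, Pi.zero_apply, norm_zero, ne_eq, OfNat.ofNat_ne_zero, not_false_eq_true,
    zero_pow, Finset.sum_const_zero] at hlower
  have hnorm : ∑ p, ‖x p‖ ^ 2 = 0 :=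
    le_antisymm (nonpos_of_mul_nonpos_right hlower (by linarith)) (by positivity)
  rw [← hxv]
  ext q
  simpa using (Finset.sum_eq_zero_iff_of_nonneg (fun p _ => by positivity)).1 hnorm
    (q.1.1, q.2) (Finset.mem_univ _)

open scoped ComplexOrder in
lemma isUnit_det_gram_subCols (hδ : δ < 1) (hRIP : BlockRIPBound Φ k δ) (hT : T.card ≤ k) :
    IsUnit ((subCols Φ T)ᴴ * subCols Φ T).det := by
  rw [isUnit_iff_ne_zero, Ne, ← exists_mulVec_eq_zero_iff]
  rintro ⟨v, hv0, hv⟩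
  exact hv0 (subCols_mulVec_eq_zero hδ hRIP hT
    ((conjTranspose_mul_self_mulVec_eq_zero _ _).1 hv))

lemma frob_mul_le_of_blockRIP {ι : Type*} [Fintype ι] (hRIP : BlockRIPBound Φ k δ)
    (hT : T.card ≤ k) {Y : Matrix (Fin K × Fin d) ι ℂ} (hY : ∀ p l, p.1 ∉ T → Y p l = 0) :
    frob (Φ * Y) ≤ √(1 + δ) * frob Y :=
  frob_mul_le_of_forall_col Φ Y fun l =>
    (hRIP _ ((ncard_chunkSupport_le (hY · l)).trans hT)).2

end Chunks

section RestrictChunks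

variable {K d L : ℕ} {X : Matrix (Fin K × Fin d) (Fin L) ℂ} {S T : Finset (Fin K)}

lemma restrictChunks_of_notMem (p : Fin K × Fin d) (l : Fin L) (hp : p.1 ∉ S) :
    restrictChunks X S p l = 0 :=
  if_neg hp

lemma sub_restrictChunks_sdiff_of_notMem (hX : ∀ p l, p.1 ∉ T → X p l = 0)
    (p : Fin K × Fin d) (l : Fin L) (hp : p.1 ∉ S) :
    (X - restrictChunks X (T \ S)) p l = 0 := by
  by_cases hT : p.1 ∈ T <;> simp [restrictChunks, hT, hp, hX]

end RestrictChunks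

theorem residue_bound_general {M K d L : ℕ}
    (Φ : Matrix (Fin M) (Fin K × Fin d) ℂ) (sbar : ℕ) (δ : ℝ)
    (hδ1 : δ < 1) (hRIP : BlockRIPBound Φ sbar δ)
    (X : Matrix (Fin K × Fin d) (Fin L) ℂ) (Nmat : Matrix (Fin M) (Fin L) ℂ)
    (T That : Finset (Fin K))
    (hTX : ∀ n : Fin K, n ∈ T ↔ ∃ j l, X (n, j) l ≠ 0)
    (hT : T.card ≤ sbar) (hThat : That.card ≤ sbar)
    (R : Matrix (Fin M) (Fin L) ℂ)
    (hR : R = (1 - subCols Φ That * pinvFC (subCols Φ That)) * (Φ * X + Nmat)) :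
    frob R ≤ Real.sqrt (1 + δ) * frob (restrictChunks X (T \ That)) + frob Nmat := by
  set P := 1 - subCols Φ That * pinvFC (subCols Φ That)
  set Z := restrictChunks X (T \ That)
  have hX : ∀ p l, p.1 ∉ T → X p l = 0 := fun p l hp =>
    not_not.1 fun h => hp ((hTX p.1).2 ⟨p.2, l, h⟩)
  have hunit := isUnit_det_gram_subCols hδ1 hRIP hThat
  have hP : IsStarProjection P := (isStarProjection_mul_pinvFC hunit).one_sub
  have hPXZ : P * (Φ * (X - Z)) = 0 := by
    rw [mul_eq_subCols_mul Φ (sub_restrictChunks_sdiff_of_notMem hX),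
      ← Matrix.mul_assoc, one_sub_mul_pinvFC_mul_self hunit, Matrix.zero_mul]
  have hRZ : R = P * (Φ * Z) + P * Nmat := by
    rw [hR, ← add_sub_cancel Z X, Matrix.mul_add, Matrix.mul_add, Matrix.mul_add, hPXZ, add_zero]
  calc frob R ≤ frob (Φ * Z) + frob Nmat := hRZ ▸ (frob_add_le _ _).trans
        (add_le_add (frob_mul_le_of_isStarProjection hP _) (frob_mul_le_of_isStarProjection hP _))
    _ ≤ √(1 + δ) * frob Z + frob Nmat := by
        gcongr
        exact frob_mul_le_of_blockRIP hRIP hT fun p l hp =>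
          restrictChunks_of_notMem p l fun h => hp (Finset.mem_sdiff.1 h).1

/-- Residue bound: if `T` is the chunk support of `X` (`|T| ≤ s̄`), `|T̂| ≤ s̄` and
`R = (I − Φ_{[T̂]} Φ_{[T̂]}†)(Φ_{[T]} X^{[T]} + N)`, then
`‖R‖_F ≤ √(1 + δ_{s̄|d}) ‖X^{[T∖T̂]}‖_F + ‖N‖_F`. -/
theorem residue_bound {M K d L : ℕ}
    (Φ : Matrix (Fin M) (Fin K × Fin d) ℂ) (sbar : ℕ) (δ : ℝ)
    (hδ0 : 0 ≤ δ) (hδ1 : δ < 1) (hRIP : BlockRIPBound Φ sbar δ)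
    (X : Matrix (Fin K × Fin d) (Fin L) ℂ) (Nmat : Matrix (Fin M) (Fin L) ℂ)
    (T That : Finset (Fin K))
    (hTX : ∀ n : Fin K, n ∈ T ↔ ∃ j l, X (n, j) l ≠ 0)
    (hT : T.card ≤ sbar) (hThat : That.card ≤ sbar)
    (R : Matrix (Fin M) (Fin L) ℂ)
    (hR : R = (1 - subCols Φ That * pinvFC (subCols Φ That)) * (Φ * X + Nmat)) :
    frob R ≤ Real.sqrt (1 + δ) * frob (restrictChunks X (T \ That)) + frob Nmat :=
  residue_bound_general Φ sbar δ hδ1 hRIP X Nmat T That hTX hT hThat R hR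
end

section
/- Let a₀ = ‖R_{(0)}‖_F ≤ √(1+δ)·ρ^{1/2} + η, and suppose ‖R_{(l+1)}‖_F ≤ C₁‖R_{(l)}‖_F + C₂η with 0 < C₁ < 1. If ρ > ((C₂+C₁−1)/(1−C₁) · η)² and γ > C₂η/(1−C₁), then after at most n_co = log_{C₁}[(γ − C₂η/(1−C₁)) / (√(1+δ)ρ^{1/2} + η − C₂η/(1−C₁))] iterations, the residue satisfies ‖R_{(n)}‖_F ≤ γ for all n ≥ n_co. -/
/-- Convergence speed: under the residue recursion with `0 < C₁ < 1`, initial bound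
`‖R_{(0)}‖_F ≤ √(1+δ)·ρ^{1/2} + η`, energy condition `ρ > ((C₂+C₁−1)/(1−C₁)·η)²` and
threshold `γ > C₂η/(1−C₁)`, the residue satisfies `‖R_{(n)}‖_F ≤ γ` for every `n` at
least `n_co = log_{C₁}[(γ − C₂η/(1−C₁)) / (√(1+δ)ρ^{1/2} + η − C₂η/(1−C₁))]`. -/
theorem convergence_speed {M L : ℕ} (R : ℕ → Matrix (Fin M) (Fin L) ℂ)
    (C₁ C₂ η δ ρ γ : ℝ)
    (hC₁0 : 0 < C₁) (hC₁1 : C₁ < 1) (hC₂ : 0 < C₂) (hη : 0 ≤ η)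
    (hδ0 : 0 ≤ δ) (hδ1 : δ < 1)
    (hinit : frob (R 0) ≤ Real.sqrt (1 + δ) * Real.sqrt ρ + η)
    (hrec : ∀ l, frob (R (l + 1)) ≤ C₁ * frob (R l) + C₂ * η)
    (hρ : ρ > ((C₂ + C₁ - 1) / (1 - C₁) * η) ^ 2)
    (hγ : γ > C₂ * η / (1 - C₁)) :
    ∀ n : ℕ,
      Real.logb C₁ ((γ - C₂ * η / (1 - C₁)) /
          (Real.sqrt (1 + δ) * Real.sqrt ρ + η - C₂ * η / (1 - C₁))) ≤ n →
        frob (R n) ≤ γ := by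
  have h1C : 0 < 1 - C₁ := by linarith
  set E : ℝ := C₂ * η / (1 - C₁) with hE
  set a₀ : ℝ := Real.sqrt (1 + δ) * Real.sqrt ρ + η with ha₀
  -- a₀ - E > 0
  have hx : (C₂ + C₁ - 1) / (1 - C₁) * η < Real.sqrt ρ := by
    have h := Real.sqrt_lt_sqrt (sq_nonneg _) hρ
    rw [Real.sqrt_sq_eq_abs] at h
    exact lt_of_le_of_lt (le_abs_self _) h
  have hsqδ : (1 : ℝ) ≤ Real.sqrt (1 + δ) := by
    have := Real.sqrt_le_sqrt (show (1:ℝ) ≤ 1 + δ by linarith)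
    simpa using this
  have hsρ : 0 ≤ Real.sqrt ρ := Real.sqrt_nonneg _
  have hsub : 0 < a₀ - E := by
    have h1 : Real.sqrt ρ ≤ Real.sqrt (1 + δ) * Real.sqrt ρ := by
      nlinarith
    have h2 : (C₂ + C₁ - 1) / (1 - C₁) * η + η = E := by
      rw [hE, eq_div_iff (ne_of_gt h1C)]
      field_simp
      ring
    nlinarith [hx, h1]
  -- main bound by induction
  have hbound : ∀ n : ℕ, frob (R n) ≤ C₁ ^ n * (a₀ - E) + E := by
    intro n
    induction n with
    | zero => simpa using hinit
    | succ k ih =>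
      have h1 := hrec k
      have h2 : C₁ * frob (R k) ≤ C₁ * (C₁ ^ k * (a₀ - E) + E) :=
        mul_le_mul_of_nonneg_left ih (le_of_lt hC₁0)
      have h3 : C₁ * E + C₂ * η = E := by
        have hEe : E * (1 - C₁) = C₂ * η := by rw [hE]; field_simp
        nlinarith [hEe]
      calc frob (R (k + 1)) ≤ C₁ * frob (R k) + C₂ * η := h1
        _ ≤ C₁ * (C₁ ^ k * (a₀ - E) + E) + C₂ * η := by linarith
        _ = C₁ ^ (k + 1) * (a₀ - E) + (C₁ * E + C₂ * η) := by ring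
        _ = C₁ ^ (k + 1) * (a₀ - E) + E := by rw [h3]
  intro n hn
  -- from the logb condition, C₁ ^ n ≤ (γ - E) / (a₀ - E)
  have hq : 0 < (γ - E) / (a₀ - E) := div_pos (by linarith) hsub
  have hlogC : Real.log C₁ < 0 := Real.log_neg hC₁0 hC₁1
  have hlog : (n : ℝ) * Real.log C₁ ≤ Real.log ((γ - E) / (a₀ - E)) := by
    rw [Real.logb, div_le_iff_of_neg hlogC] at hn
    linarith
  have hpow : C₁ ^ n ≤ (γ - E) / (a₀ - E) := by
    have h1 : Real.exp ((n : ℝ) * Real.log C₁) ≤ (γ - E) / (a₀ - E) := by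
      calc Real.exp ((n : ℝ) * Real.log C₁)
          ≤ Real.exp (Real.log ((γ - E) / (a₀ - E))) := Real.exp_le_exp.2 hlog
        _ = (γ - E) / (a₀ - E) := Real.exp_log hq
    have h2 : Real.exp ((n : ℝ) * Real.log C₁) = C₁ ^ n := by
      rw [Real.exp_nat_mul, Real.exp_log hC₁0]
    linarith [h2 ▸ h1]
  have := hbound n
  have h4 : C₁ ^ n * (a₀ - E) ≤ (γ - E) / (a₀ - E) * (a₀ - E) :=
    mul_le_mul_of_nonneg_right hpow (le_of_lt hsub)
  rw [div_mul_cancel₀ _ (ne_of_gt hsub)] at h4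
  linarith
end
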